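/- Let k be a field of characteristic zero, n > 1, λ ∈ k a primitive n-th root of unity, and let P = MvPolynomial (Fin 3) k carry a Poisson bracket ⁅·,·⁆ together with a linear Taft action datum (g, x). If ⁅u₂,u₃⁆ is homogeneous of degree 1, then there exists b ∈ k such that ⁅u₁,u₂⁆ = 0, ⁅u₃,u₂⁆ = b·u₂, and ⁅u₃,u₁⁆ = b·u₁. -/

import Mathlib

/-!
Write `q = λ⁻¹`. Then `g` is diagonal on monomials, `g (u^d) = q ^ d₁ • u^d`, and `x` is `u₂` times
the Jackson `q`-derivative in `u₁`: `x (u₁ · u^d) = [d₁ + 1]_q • u₂ · u^d`. A monomial occurring in a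
`q`-eigenvector of `g` has `u₁`-exponent `m + 1` with `q ^ (m + 1) = q`, so
`[m + 1]_q (q - 1) = q - 1 ≠ 0`; hence `x` transports the support of such an eigenvector
injectively, replacing one `u₁` by one `u₂`. Both `⁅u₁,u₂⁆` and `⁅u₁,u₃⁆` are `q`-eigenvectors,
and `x` sends them to `⁅u₂,u₂⁆ = 0` and to `⁅u₂,u₃⁆`. So `⁅u₁,u₂⁆ = 0`, and `⁅u₁,u₃⁆` is
homogeneous of degree one and supported on monomials divisible by `u₁`, i.e. `⁅u₁,u₃⁆ = c • u₁`;
then `⁅u₂,u₃⁆ = x (c • u₁) = c • u₂`.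
-/

open MvPolynomial

open Finset in
theorem geom_sum_ne_zero_of_pow_eq_self {R : Type*} [Ring R] {q : R} (hq : q ≠ 1) {m : ℕ}
    (h : q ^ m = q) : ∑ j ∈ range m, q ^ j ≠ 0 := by
  intro h0
  have := geom_sum_mul q m
  rw [h0, zero_mul, h] at this
  exact sub_ne_zero.2 hq this.symm

theorem Finsupp.exists_eq_add_single_one {σ : Type*} {d : σ →₀ ℕ} {i : σ} (hd : d i ≠ 0) :
    ∃ d', d = d' + Finsupp.single i 1 :=
  ⟨_, (tsub_add_cancel_of_le (Finsupp.single_le_iff.2 (Nat.one_le_iff_ne_zero.2 hd))).symm⟩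

namespace MvPolynomial

variable {R σ : Type*} [CommRing R] {q : R} {i₀ i₁ : σ}
  {g : MvPolynomial σ R →ₐ[R] MvPolynomial σ R}

theorem algHom_monomial_eq_pow_smul (hg₀ : g (X i₀) = q • X i₀) (hg : ∀ j, j ≠ i₀ → g (X j) = X j)
    (d : σ →₀ ℕ) (a : R) : g (monomial d a) = q ^ d i₀ • monomial d a := by
  classical
  induction d using Finsupp.induction_linear generalizing a with
  | zero => simp [← C_apply]
  | add d e hd he =>
    rw [← mul_one a, ← monomial_mul, map_mul, hd, he, Finsupp.add_apply, pow_add, smul_mul_smul]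
  | single j m =>
    rw [← C_mul_X_pow_eq_monomial, map_mul, algHom_C, algebraMap_eq, map_pow]
    by_cases hj : j = i₀
    · subst hj
      rw [hg₀, smul_pow, mul_smul_comm, Finsupp.single_eq_same]
    · rw [hg j hj, Finsupp.single_eq_of_ne (Ne.symm hj), pow_zero, one_smul]

theorem coeff_algHom_eq_pow_mul (hg₀ : g (X i₀) = q • X i₀) (hg : ∀ j, j ≠ i₀ → g (X j) = X j)
    (p : MvPolynomial σ R) (d : σ →₀ ℕ) : coeff d (g p) = q ^ d i₀ * coeff d p := by
  classical
  induction p using MvPolynomial.induction_on' with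
  | monomial e a =>
    rw [algHom_monomial_eq_pow_smul hg₀ hg, coeff_smul, coeff_monomial, smul_eq_mul]
    split_ifs with h
    · rw [h]
    · rw [mul_zero, mul_zero]
  | add p p' hp hp' => rw [map_add, coeff_add, coeff_add, hp, hp', mul_add]

theorem pow_eq_of_coeff_ne_zero_of_eigen [IsDomain R] (hg₀ : g (X i₀) = q • X i₀)
    (hg : ∀ j, j ≠ i₀ → g (X j) = X j) {p : MvPolynomial σ R} (hp : g p = q • p)
    {d : σ →₀ ℕ} (hd : coeff d p ≠ 0) : q ^ d i₀ = q := by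
  have := coeff_algHom_eq_pow_mul hg₀ hg p d
  rw [hp, coeff_smul, smul_eq_mul] at this
  exact mul_right_cancel₀ hd this.symm

theorem exists_eq_add_single_of_eigen [IsDomain R] (hq : q ≠ 1) (hg₀ : g (X i₀) = q • X i₀)
    (hg : ∀ j, j ≠ i₀ → g (X j) = X j) {p : MvPolynomial σ R} (hp : g p = q • p)
    {e : σ →₀ ℕ} (he : coeff e p ≠ 0) :
    ∃ d, e = d + Finsupp.single i₀ 1 ∧ ∑ j ∈ Finset.range (d i₀ + 1), q ^ j ≠ 0 := by
  have hpow := pow_eq_of_coeff_ne_zero_of_eigen hg₀ hg hp he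
  have he₀ : e i₀ ≠ 0 := fun h0 => hq (by rw [← hpow, h0, pow_zero])
  obtain ⟨d, rfl⟩ := Finsupp.exists_eq_add_single_one he₀
  refine ⟨d, rfl, geom_sum_ne_zero_of_pow_eq_self hq ?_⟩
  simpa using hpow

variable {x : MvPolynomial σ R →ₗ[R] MvPolynomial σ R}

theorem twisted_eq_zero_of_mem_supported (hx_mul : ∀ a b, x (a * b) = g a * x b + x a * b)
    (hx : ∀ j, j ≠ i₀ → x (X j) = 0) {p : MvPolynomial σ R} (hp : p ∈ supported R {i₀}ᶜ) :
    x p = 0 := by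
  have hx_one : x 1 = 0 := by simpa using hx_mul 1 1
  rw [supported_eq_adjoin_X] at hp
  induction hp using Algebra.adjoin_induction with
  | mem _ hp =>
    obtain ⟨j, hj, rfl⟩ := hp
    exact hx j hj
  | algebraMap r => rw [Algebra.algebraMap_eq_smul_one, map_smul, hx_one, smul_zero]
  | add _ _ _ _ hp hp' => rw [map_add, hp, hp', add_zero]
  | mul _ _ _ _ hp hp' => rw [hx_mul, hp, hp', mul_zero, zero_mul, add_zero]

theorem monomial_mem_supported_compl {d : σ →₀ ℕ} (hd : d i₀ = 0) (a : R) :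
    monomial d a ∈ supported R {i₀}ᶜ := by
  classical
  rw [mem_supported]
  intro i hi
  obtain ⟨e, he, hie⟩ := (mem_vars_iff_mem_support i).1 hi
  rw [Finset.mem_singleton.1 (support_monomial_subset he)] at hie
  rintro rfl
  exact Finsupp.mem_support_iff.1 hie hd

/-- The part of a linear Taft action datum that does not involve the bracket, with `q` for `λ⁻¹`
and `u₁ = X i₀`, `u₂ = X i₁`. -/
structure IsLinearTaftAction (g : MvPolynomial σ R →ₐ[R] MvPolynomial σ R)
    (x : MvPolynomial σ R →ₗ[R] MvPolynomial σ R) (i₀ i₁ : σ) (q : R) : Prop where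
  map_X_self : g (X i₀) = q • X i₀
  map_X_of_ne : ∀ j, j ≠ i₀ → g (X j) = X j
  twisted_X_self : x (X i₀) = X i₁
  twisted_X_of_ne : ∀ j, j ≠ i₀ → x (X j) = 0
  twisted_mul : ∀ a b, x (a * b) = g a * x b + x a * b

namespace IsLinearTaftAction

theorem twisted_monomial_add_single (h : IsLinearTaftAction g x i₀ i₁ q) (d : σ →₀ ℕ) (a : R) :
    x (monomial (d + Finsupp.single i₀ 1) a) =
      (∑ j ∈ Finset.range (d i₀ + 1), q ^ j) • monomial (d + Finsupp.single i₁ 1) a := by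
  induction hm : d i₀ generalizing d with
  | zero =>
    rw [monomial_add_single, pow_one, mul_comm, h.twisted_mul, h.twisted_X_self,
      twisted_eq_zero_of_mem_supported h.twisted_mul h.twisted_X_of_ne
        (monomial_mem_supported_compl hm a), monomial_add_single]
    simp [mul_comm]
  | succ m ih =>
    obtain ⟨d', rfl⟩ := Finsupp.exists_eq_add_single_one (by omega : d i₀ ≠ 0)
    have hd' : d' i₀ = m := by simpa using hm
    rw [monomial_add_single, pow_one, mul_comm, h.twisted_mul, h.twisted_X_self, h.map_X_self,
      ih d' hd', geom_sum_succ (n := m + 1)]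
    simp only [monomial_add_single, pow_one, smul_eq_C_mul, map_add, map_mul, map_one]
    ring

theorem coeff_twisted_add_single (h : IsLinearTaftAction g x i₀ i₁ q) (p : MvPolynomial σ R)
    (d : σ →₀ ℕ) :
    coeff (d + Finsupp.single i₁ 1) (x p) =
      (∑ j ∈ Finset.range (d i₀ + 1), q ^ j) * coeff (d + Finsupp.single i₀ 1) p := by
  classical
  induction p using MvPolynomial.induction_on' with
  | monomial e a =>
    by_cases he : e i₀ = 0
    · rw [twisted_eq_zero_of_mem_supported h.twisted_mul h.twisted_X_of_ne
        (monomial_mem_supported_compl he a), coeff_zero, coeff_monomial, if_neg, mul_zero]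
      rintro rfl
      simp at he
    · obtain ⟨e', rfl⟩ := Finsupp.exists_eq_add_single_one he
      rw [h.twisted_monomial_add_single, coeff_smul, coeff_monomial, coeff_monomial, smul_eq_mul]
      simp only [add_left_inj]
      split_ifs with hed
      · rw [hed]
      · rw [mul_zero, mul_zero]
  | add p p' hp hp' => rw [map_add, coeff_add, coeff_add, hp, hp', mul_add]

variable [IsDomain R]

theorem exists_coeff_twisted_ne_zero (h : IsLinearTaftAction g x i₀ i₁ q) (hq : q ≠ 1)
    {p : MvPolynomial σ R} (hp : g p = q • p) {e : σ →₀ ℕ} (he : coeff e p ≠ 0) :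
    ∃ d, e = d + Finsupp.single i₀ 1 ∧ coeff (d + Finsupp.single i₁ 1) (x p) ≠ 0 := by
  obtain ⟨d, rfl, hd⟩ := exists_eq_add_single_of_eigen hq h.map_X_self h.map_X_of_ne hp he
  exact ⟨d, rfl, by rw [h.coeff_twisted_add_single]; exact mul_ne_zero hd he⟩

theorem eq_zero_of_eigen_of_twisted_eq_zero (h : IsLinearTaftAction g x i₀ i₁ q) (hq : q ≠ 1)
    {p : MvPolynomial σ R} (hp : g p = q • p) (hxp : x p = 0) : p = 0 := by
  ext e
  rw [coeff_zero]
  by_contra he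
  obtain ⟨d, -, hd⟩ := h.exists_coeff_twisted_ne_zero hq hp he
  rw [hxp, coeff_zero] at hd
  exact hd rfl

theorem eq_smul_X_of_eigen_of_isHomogeneous_one (h : IsLinearTaftAction g x i₀ i₁ q)
    (hq : q ≠ 1) {p : MvPolynomial σ R} (hp : g p = q • p) (hxp : (x p).IsHomogeneous 1) :
    p = coeff (Finsupp.single i₀ 1) p • X i₀ := by
  classical
  ext e
  rw [coeff_smul, coeff_X, smul_eq_mul]
  split_ifs with he
  · rw [he, mul_one]
  · rw [mul_zero]
    by_contra hne
    obtain ⟨d, rfl, hd⟩ := h.exists_coeff_twisted_ne_zero hq hp hne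
    have hdeg : (d + Finsupp.single i₁ 1).degree = 1 := not_not.1 (mt hxp.coeff_eq_zero hd)
    rw [map_add, Finsupp.degree_single, Nat.add_eq_right, Finsupp.degree_eq_zero_iff] at hdeg
    exact he (by rw [hdeg, zero_add])

end IsLinearTaftAction

end MvPolynomial

theorem taft_linear_bracket {k : Type*} [Field k] [CharZero k]
    {n : ℕ} (hn : 1 < n) {lam : k} (hlam : IsPrimitiveRoot lam n)
    (B : MvPolynomial (Fin 3) k → MvPolynomial (Fin 3) k → MvPolynomial (Fin 3) k)
    (hB_smull : ∀ (r : k) (a b), B (r • a) b = r • B a b)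
    (hB_smulr : ∀ (r : k) (a b), B a (r • b) = r • B a b)
    (hB_anti : ∀ a b, B a b = -B b a)
    (g : MvPolynomial (Fin 3) k ≃ₐ[k] MvPolynomial (Fin 3) k)
    (hg0 : g (X 0) = lam⁻¹ • X 0)
    (hgi : ∀ i : Fin 3, i ≠ 0 → g (X i) = X i)
    (hgB : ∀ a b, g (B a b) = B (g a) (g b))
    (x : MvPolynomial (Fin 3) k →ₗ[k] MvPolynomial (Fin 3) k)
    (hx0 : x (X 0) = X 1)
    (hxi : ∀ i : Fin 3, i ≠ 0 → x (X i) = 0)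
    (hx_mul : ∀ a b, x (a * b) = g a * x b + x a * b)
    (hxB : ∀ a b, x (B a b) = B (g a) (x b) + B (x a) b)
    (hhom : (B (X 1) (X 2)).IsHomogeneous 1) :
    ∃ b : k, B (X 0) (X 1) = 0 ∧ B (X 2) (X 1) = b • X 1 ∧ B (X 2) (X 0) = b • X 0 := by
  have hq : lam⁻¹ ≠ 1 := hlam.inv.ne_one hn
  have hT : IsLinearTaftAction g.toAlgHom x 0 1 lam⁻¹ := ⟨hg0, hgi, hx0, hxi, hx_mul⟩
  have hB_zero (a) : B a 0 = 0 := by simpa using hB_smulr 0 a 0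
  have heigen (i : Fin 3) (hi : i ≠ 0) : g (B (X 0) (X i)) = lam⁻¹ • B (X 0) (X i) := by
    rw [hgB, hg0, hgi i hi, hB_smull]
  have htwist (i : Fin 3) (hi : i ≠ 0) : x (B (X 0) (X i)) = B (X 1) (X i) := by
    rw [hxB, hx0, hxi i hi, hB_zero, zero_add]
  have h01 : B (X 0) (X 1) = 0 :=
    hT.eq_zero_of_eigen_of_twisted_eq_zero hq (heigen 1 (by decide))
      (by rw [htwist 1 (by decide), self_eq_neg.1 (hB_anti _ _)])
  set c := coeff (Finsupp.single 0 1) (B (X 0) (X 2))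
  have h02 : B (X 0) (X 2) = c • X 0 :=
    hT.eq_smul_X_of_eigen_of_isHomogeneous_one hq (heigen 2 (by decide))
      (by rwa [htwist 2 (by decide)])
  have h12 : B (X 1) (X 2) = c • X 1 := by rw [← htwist 2 (by decide), h02, map_smul, hx0]
  exact ⟨-c, h01, by rw [hB_anti, h12, neg_smul], by rw [hB_anti, h02, neg_smul]⟩
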